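/- Suppose g ∈ H satisfies: there exists c ∈ ℂ^n with ‖g − F c‖_H ≤ Cε and ‖c‖_{ℓ²} ≤ B. Then the TSVD approximation Q_ε g satisfies ‖g − Q_ε g‖_H ≤ (C + B) ε. -/

import Mathlib

/-! The residual `x ↦ x - Q_ε x` is the orthogonal projection onto the complement of
`span {u_j : σ_j > ε}`, so it does not increase norms and is additive. Split
`g = (g - F c) + F c`: the first part contributes at most `‖g - F c‖ ≤ C ε`, and the residual
of `F c` is `∑_{σ_j ≤ ε} σ_j ⟪v_j, c⟫ u_j`, whose norm is at most `ε ‖c‖ ≤ B ε` by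
orthonormality of the `u_j` and Bessel's inequality for the `v_j`. -/

open scoped InnerProductSpace

section
variable {𝕜 E ι : Type*} [RCLike 𝕜] [NormedAddCommGroup E] [InnerProductSpace 𝕜 E] {u : ι → E}

local notation "⟪" x ", " y "⟫" => inner 𝕜 x y

theorem add_sub_sum_inner_smul (s : Finset ι) (x y : E) :
    x + y - ∑ i ∈ s, ⟪u i, x + y⟫ • u i
      = (x - ∑ i ∈ s, ⟪u i, x⟫ • u i) + (y - ∑ i ∈ s, ⟪u i, y⟫ • u i) := by
  simp only [inner_add_right, add_smul, Finset.sum_add_distrib]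
  abel

theorem Orthonormal.norm_sum_smul_sq (hu : Orthonormal 𝕜 u) (s : Finset ι) (l : ι → 𝕜) :
    ‖∑ i ∈ s, l i • u i‖ ^ 2 = ∑ i ∈ s, ‖l i‖ ^ 2 := by
  rw [@norm_sq_eq_re_inner 𝕜, hu.inner_sum, map_sum]
  refine Finset.sum_congr rfl fun i _ => ?_
  rw [RCLike.conj_mul, ← RCLike.ofReal_pow, RCLike.ofReal_re]

theorem Orthonormal.norm_sub_sum_inner_smul_le (hu : Orthonormal 𝕜 u) (s : Finset ι) (x : E) :
    ‖x - ∑ i ∈ s, ⟪u i, x⟫ • u i‖ ≤ ‖x‖ := by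
  set p := ∑ i ∈ s, ⟪u i, x⟫ • u i
  have hp : ⟪p, x - p⟫ = 0 := by
    rw [inner_sub_right, hu.inner_sum, sub_eq_zero, sum_inner]
    simp only [inner_smul_left]
  have hpyth := norm_add_sq_eq_norm_sq_add_norm_sq_of_inner_eq_zero p (x - p) hp
  rw [add_sub_cancel] at hpyth
  nlinarith [norm_nonneg p, norm_nonneg x, norm_nonneg (x - p)]

theorem Orthonormal.sum_smul_sub_sum_inner_smul [Fintype ι] [DecidableEq ι]
    (hu : Orthonormal 𝕜 u) (s : Finset ι) (l : ι → 𝕜) :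
    ∑ j, l j • u j - ∑ i ∈ s, ⟪u i, ∑ j, l j • u j⟫ • u i = ∑ j ∈ sᶜ, l j • u j := by
  simp only [hu.inner_right_fintype]
  rw [← Finset.sum_add_sum_compl s, add_sub_cancel_left]

theorem Orthonormal.norm_sum_smul_inner_smul_le {E' : Type*} [NormedAddCommGroup E']
    [InnerProductSpace 𝕜 E'] {v : ι → E'} (hu : Orthonormal 𝕜 u) (hv : Orthonormal 𝕜 v)
    (s : Finset ι) {a : ι → 𝕜} {ε : ℝ} (hε : 0 ≤ ε)
    (ha : ∀ i ∈ s, ‖a i‖ ≤ ε) (x : E') :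
    ‖∑ i ∈ s, a i • ⟪v i, x⟫ • u i‖ ≤ ε * ‖x‖ := by
  have hsq : ‖∑ i ∈ s, a i • ⟪v i, x⟫ • u i‖ ^ 2 ≤ (ε * ‖x‖) ^ 2 :=
    calc ‖∑ i ∈ s, a i • ⟪v i, x⟫ • u i‖ ^ 2 = ∑ i ∈ s, ‖a i‖ ^ 2 * ‖⟪v i, x⟫‖ ^ 2 := by
          simp only [smul_smul, hu.norm_sum_smul_sq, norm_mul, mul_pow]
      _ ≤ ∑ i ∈ s, ε ^ 2 * ‖⟪v i, x⟫‖ ^ 2 := by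
          gcongr with i hi
          exact ha i hi
      _ ≤ ε ^ 2 * ‖x‖ ^ 2 := by
          rw [← Finset.mul_sum]
          gcongr
          exact hv.sum_inner_products_le x
      _ = (ε * ‖x‖) ^ 2 := (mul_pow _ _ _).symm
  exact (sq_le_sq₀ (norm_nonneg _) (by positivity)).1 hsq

end

open scoped Classical in
theorem stmt_13_general {H : Type*} [NormedAddCommGroup H] [InnerProductSpace ℂ H]
    {n : ℕ} (F : EuclideanSpace ℂ (Fin n) →ₗ[ℂ] H)
    (σ : Fin n → ℝ) (v : Fin n → EuclideanSpace ℂ (Fin n)) (u : Fin n → H)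
    (hσ : ∀ j, 0 ≤ σ j) (hv : Orthonormal ℂ v) (hu : Orthonormal ℂ u)
    (hF : ∀ c, F c = ∑ j, (σ j : ℂ) • (⟪v j, c⟫_ℂ • u j))
    (ε C B : ℝ) (hε : 0 < ε) (g : H)
    (hc : ∃ c : EuclideanSpace ℂ (Fin n), ‖g - F c‖ ≤ C * ε ∧ ‖c‖ ≤ B) :
    ‖g - ∑ j ∈ Finset.univ.filter (fun j => ε < σ j), ⟪u j, g⟫_ℂ • u j‖
      ≤ (C + B) * ε := by
  obtain ⟨c, hgc, hcB⟩ := hc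
  set s := Finset.univ.filter (fun j => ε < σ j)
  have hFc : F c - ∑ j ∈ s, ⟪u j, F c⟫_ℂ • u j = ∑ j ∈ sᶜ, (σ j : ℂ) • ⟪v j, c⟫_ℂ • u j := by
    simp only [hF, smul_smul]
    exact hu.sum_smul_sub_sum_inner_smul s _
  have hsmall : ∀ j ∈ sᶜ, ‖(σ j : ℂ)‖ ≤ ε := fun j hj => by
    rw [Complex.norm_real, Real.norm_of_nonneg (hσ j)]
    simpa [s] using hj
  calc ‖g - ∑ j ∈ s, ⟪u j, g⟫_ℂ • u j‖
      = ‖(g - F c - ∑ j ∈ s, ⟪u j, g - F c⟫_ℂ • u j)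
          + (F c - ∑ j ∈ s, ⟪u j, F c⟫_ℂ • u j)‖ := by
        rw [← add_sub_sum_inner_smul, sub_add_cancel]
    _ ≤ ‖g - F c‖ + ε * ‖c‖ := by
        rw [hFc]
        exact norm_add_le_of_le (hu.norm_sub_sum_inner_smul_le s _)
          (hu.norm_sum_smul_inner_smul_le hv sᶜ hε.le hsmall c)
    _ ≤ C * ε + ε * B := by gcongr
    _ = (C + B) * ε := by ring

/-- Corollary of Lemma 2.1: if some `c ∈ ℂⁿ` satisfies `‖g − F c‖ ≤ Cε` and `‖c‖ ≤ B`,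
then the TSVD approximation satisfies `‖g − Q_ε g‖ ≤ (C + B) ε`. -/
theorem stmt_13 {H : Type*} [NormedAddCommGroup H] [InnerProductSpace ℂ H]
    {n : ℕ} (F : EuclideanSpace ℂ (Fin n) →ₗ[ℂ] H)
    (σ : Fin n → ℝ) (v : Fin n → EuclideanSpace ℂ (Fin n)) (u : Fin n → H)
    (hσ : ∀ j, 0 ≤ σ j) (hv : Orthonormal ℂ v) (hu : Orthonormal ℂ u)
    (hF : ∀ c, F c = ∑ j, (σ j : ℂ) • (⟪v j, c⟫_ℂ • u j))
    (ε C B : ℝ) (hε : 0 < ε) (hC : 0 ≤ C) (hB : 0 ≤ B) (g : H)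
    (hc : ∃ c : EuclideanSpace ℂ (Fin n), ‖g - F c‖ ≤ C * ε ∧ ‖c‖ ≤ B) :
    ‖g - ∑ j ∈ Finset.univ.filter (fun j => ε < σ j), ⟪u j, g⟫_ℂ • u j‖
      ≤ (C + B) * ε :=
  stmt_13_general F σ v u hσ hv hu hF ε C B hε g hc
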